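/- In A_n(X) with n odd, for all a,b,c,d ∈ X one has V(a,c)·E·G(b,d)·O = γ(a,b)·G(c,d)·O, where O = e_1 e_3 ⋯ e_{n−2} and E = e_2 e_4 ⋯ e_{n−1}. -/
import Mathlib


/-- The ascending product `e j * e (j+1) * ⋯ * e k` (empty if `k + 1 ≤ j`). -/
def ascProd {A : Type*} [Ring A] (e : ℕ → A) (j k : ℕ) : A :=
  ((List.range (k + 1 - j)).map (fun i => e (j + i))).prod

/-- The descending product `e k * e (k-1) * ⋯ * e j` (empty if `k + 1 ≤ j`). -/
def descProd {A : Type*} [Ring A] (e : ℕ → A) (j k : ℕ) : A :=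
  ((List.range (k + 1 - j)).map (fun i => e (k - i))).prod

/-- For `n` odd, `O = e 1 * e 3 * ⋯ * e (n-2)` (equal to `1` when `n = 1`). -/
def Oprod {A : Type*} [Ring A] (e : ℕ → A) (n : ℕ) : A :=
  ((List.range ((n - 1) / 2)).map (fun i => e (2 * i + 1))).prod

/-- For `n` odd, `E = e 2 * e 4 * ⋯ * e (n-1)` (equal to `1` when `n = 1`). -/
def Eprod {A : Type*} [Ring A] (e : ℕ → A) (n : ℕ) : A :=
  ((List.range ((n - 1) / 2)).map (fun i => e (2 * i + 2))).prod

/-- For `n` even, `Θ = e 1 * e 3 * ⋯ * e (n-1)`. -/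
def ThetaProd {A : Type*} [Ring A] (e : ℕ → A) (n : ℕ) : A :=
  ((List.range (n / 2)).map (fun i => e (2 * i + 1))).prod

/-- For `n` even, `Ω = e 2 * e 4 * ⋯ * e (n-2)` (equal to `1` when `n = 2`). -/
def OmegaProd {A : Type*} [Ring A] (e : ℕ → A) (n : ℕ) : A :=
  ((List.range (n / 2 - 1)).map (fun i => e (2 * i + 2))).prod

/-- The defining relations (L1)–(L38) of the algebraic label algebra `A_n(X)`,
with TL generators `e i` (`1 ≤ i ≤ n - 1`), label generators `F a b`, `G a b`
(even) and `W a b`, `V a b` (odd), and parameters `β`, `α a b`, `δ a b`, `γ a b`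
in a commutative base ring `R`. -/
structure LabelAlgebraRel (R : Type*) [CommRing R] (A : Type*) [Ring A] [Algebra R A]
    (X : Type*) (n : ℕ) (e : ℕ → A) (F G W V : X → X → A)
    (β : R) (α δ γ : X → X → R) : Prop where
  L1 : ∀ i j, 1 ≤ i → i ≤ n - 1 → 1 ≤ j → j ≤ n - 1 → (i + 2 ≤ j ∨ j + 2 ≤ i) →
    e i * e j = e j * e i
  L2 : ∀ (a b : X) (j : ℕ), 2 ≤ j → j ≤ n - 1 → F a b * e j = e j * F a b
  L3 : ∀ (a b : X) (j : ℕ), 1 ≤ j → j ≤ n - 2 → G a b * e j = e j * G a b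
  L4 : ∀ (a b c d : X), 2 ≤ n → F a b * G c d = G c d * F a b
  L5 : ∀ i j, 1 ≤ i → i ≤ n - 1 → 1 ≤ j → j ≤ n - 1 → (i = j + 1 ∨ j = i + 1) →
    e i * e j * e i = e i
  L6 : ∀ (a b : X) (j : ℕ), 2 ≤ j → j ≤ n - 1 → e j * W a b = W a b * e (j - 1)
  L7 : ∀ (a b : X) (j : ℕ), 1 ≤ j → j ≤ n - 2 → e j * V a b = V a b * e (j + 1)
  L8 : ∀ (a b c d : X), 2 ≤ n → G a b * W c d = W c a * e (n - 1) * G b d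
  L9 : ∀ (a b c d : X), 2 ≤ n → F a b * V c d = V a d * e 1 * F b c
  L10 : ∀ (a b c d : X), 2 ≤ n → W a b * F c d = F a c * e 1 * W d b
  L11 : ∀ (a b c d : X), 2 ≤ n → V a b * G c d = G b c * e (n - 1) * V a d
  L12 : ∀ (a b : X), 2 ≤ n → e 1 * W a b = ascProd e 1 (n - 1) * V a b
  L13 : ∀ (a b : X), 2 ≤ n → W a b * e (n - 1) = V a b * ascProd e 1 (n - 1)
  L14 : ∀ (a b : X), 2 ≤ n → e (n - 1) * V a b = descProd e 1 (n - 1) * W a b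
  L15 : ∀ (a b : X), 2 ≤ n → V a b * e 1 = W a b * descProd e 1 (n - 1)
  L16 : ∀ (a b c d : X), W a b * W c d = F a c * ascProd e 1 (n - 1) * G b d
  L17 : ∀ (a b c d : X), V a b * V c d = G b d * descProd e 1 (n - 1) * F a c
  L18 : ∀ (a b c d : X), 2 ≤ n → V a b * e 1 * W c d = F a c * G b d
  L19 : ∀ j, 1 ≤ j → j ≤ n - 1 → e j * e j = β • e j
  L20 : ∀ (a b c d : X), F c a * F b d = α a b • F c d
  L21 : ∀ (a b : X), 2 ≤ n → e 1 * F a b * e 1 = α a b • e 1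
  L22 : ∀ (a b c d : X), F c a * W b d = α a b • W c d
  L23 : ∀ (a b c d : X), V a d * F b c = α a b • V c d
  L24 : ∀ (a b c d : X), V a c * W b d = α a b • G c d
  L25 : ∀ (a b c d : X), G c a * G b d = δ a b • G c d
  L26 : ∀ (a b : X), 2 ≤ n → e (n - 1) * G a b * e (n - 1) = δ a b • e (n - 1)
  L27 : ∀ (a b c d : X), G c a * V d b = δ a b • V d c
  L28 : ∀ (a b c d : X), W c a * G b d = δ a b • W c d
  L29 : ∀ (a b c d : X), W c a * V d b = δ a b • F c d
  L30 : Odd n → ∀ (a b c d : X),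
    W c b * Oprod e n * W a d * Oprod e n = γ a b • (W c d * Oprod e n)
  L31 : Odd n → ∀ (a b c d : X),
    F c a * Eprod e n * V d b * Eprod e n = γ a b • (F c d * Eprod e n)
  L32 : Odd n → ∀ (a b c d : X),
    V a d * Eprod e n * V c b * Eprod e n = γ a b • (V c d * Eprod e n)
  L33 : Odd n → ∀ (a b c d : X),
    G c b * Oprod e n * W a d * Oprod e n = γ a b • (G c d * Oprod e n)
  L34 : Even n → ∀ (a b : X),
    ThetaProd e n * W a b * ThetaProd e n = γ a b • ThetaProd e n
  L35 : n = 1 → ∀ (a b c d : X), F c a * G b d = γ a b • W c d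
  L36 : n = 1 → ∀ (a b c d : X), G d b * F a c = γ a b • V c d
  L37 : n = 1 → ∀ (a b c d : X), W c b * F a d = γ a b • F c d
  L38 : n = 1 → ∀ (a b c d : X), V a c * G b d = γ a b • G c d

lemma listProd_range_succ {A : Type*} [Ring A] (f : ℕ → A) (k : ℕ) :
    ((List.range (k+1)).map f).prod = ((List.range k).map f).prod * f k := by
  rw [List.range_succ, List.map_append, List.prod_append]; simp

lemma descProd_succ {A : Type*} [Ring A] (e : ℕ → A) (k : ℕ) :
    descProd e 1 (k+1) = e (k+1) * descProd e 1 k := by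
  unfold descProd
  rw [show k+1+1-1 = k+1 from rfl, show k+1-1 = k from rfl, List.range_succ_eq_map,
    List.map_cons, List.prod_cons, List.map_map]
  have : List.map ((fun i => e (k + 1 - i)) ∘ Nat.succ) (List.range k)
      = List.map (fun i => e (k - i)) (List.range k) := by
    apply List.map_congr_left
    intro i _
    simp [Function.comp, Nat.succ_sub_succ]
  rw [this]; norm_num

lemma descProd_one {A : Type*} [Ring A] (e : ℕ → A) : descProd e 1 1 = e 1 := by
  unfold descProd
  norm_num [List.range_succ]

lemma lemV {A : Type*} [Ring A] (e : ℕ → A) (v : A) (m : ℕ)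
    (h7 : ∀ j, 1 ≤ j → j ≤ 2*m - 1 → e j * v = v * e (j+1)) :
    v * ((List.range m).map (fun i => e (2*i+2))).prod
      = ((List.range m).map (fun i => e (2*i+1))).prod * v := by
  induction m with
  | zero => simp
  | succ k ih =>
    rw [listProd_range_succ, listProd_range_succ, ← mul_assoc,
      ih (fun j h1 h2 => h7 j h1 (by omega)), mul_assoc,
      show 2*k+2 = (2*k+1)+1 by ring, ← h7 (2*k+1) (by omega) (by omega), ← mul_assoc]

lemma tlstep {A : Type*} [Ring A] (x y z p u : A) (h1 : z * p = u * p)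
    (hc : x * (u * p) = (u * p) * x) (hb : x * y * x = x) :
    x * (y * z) * (p * x) = u * (p * x) := by
  calc x * (y * z) * (p * x) = x * y * (z * p) * x := by simp only [mul_assoc]
    _ = x * y * (u * p) * x := by rw [h1]
    _ = x * y * (x * (u * p)) := by rw [mul_assoc (x*y), ← hc, ← mul_assoc (x*y)]
    _ = x * y * x * (u * p) := by rw [← mul_assoc]
    _ = x * (u * p) := by rw [hb]
    _ = u * (p * x) := by rw [hc]; simp [mul_assoc]

lemma lemTL {A : Type*} [Ring A] (e : ℕ → A) (m : ℕ)
    (hcomm : ∀ i j, 1 ≤ i → i + 2 ≤ j → j ≤ 2*m → e i * e j = e j * e i)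
    (hbraid : ∀ i, 1 ≤ i → i + 1 ≤ 2*m → e (i+1) * e i * e (i+1) = e (i+1)) :
    ∀ jj, jj + 1 ≤ m →
      descProd e 1 (2*jj+1) * ((List.range jj).map (fun i => e (2*i+3))).prod
        = e 1 * ((List.range jj).map (fun i => e (2*i+3))).prod := by
  intro jj
  induction jj with
  | zero => intro _; simp [descProd_one]
  | succ j ih =>
    intro hj
    have ihj := ih (by omega)
    set P : A := ((List.range j).map (fun i => e (2*i+3))).prod with hP
    have cP : Commute (e (2*j+3)) (e 1 * P) := by
      refine (Commute.mul_right ?_ ?_)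
      · exact (hcomm 1 (2*j+3) (by omega) (by omega) (by omega)).symm
      · refine Commute.list_prod_right _ _ ?_
        intro y hy
        obtain ⟨i, hi, rfl⟩ := List.mem_map.mp hy
        have hi' := List.mem_range.mp hi
        exact (hcomm (2*i+3) (2*j+3) (by omega) (by omega) (by omega)).symm
    have hb : e (2*j+3) * e (2*j+2) * e (2*j+3) = e (2*j+3) := by
      have := hbraid (2*j+2) (by omega) (by omega)
      simpa [show 2*j+2+1 = 2*j+3 by ring] using this
    rw [listProd_range_succ]
    rw [show 2*(j+1)+1 = (2*j+2)+1 by ring, descProd_succ,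
      show 2*j+2 = (2*j+1)+1 by ring, descProd_succ, show (2*j+1)+1 = 2*j+2 by ring,
      show 2*j+2+1 = 2*j+3 by ring]
    exact tlstep _ _ _ _ _ ihj cP.eq hb

lemma Osplit {A : Type*} [Ring A] (e : ℕ → A) (m' : ℕ) :
    ((List.range (m'+1)).map (fun i => e (2*i+1))).prod
      = e 1 * ((List.range m').map (fun i => e (2*i+3))).prod := by
  rw [List.range_succ_eq_map, List.map_cons, List.prod_cons, List.map_map]
  have : List.map ((fun i => e (2*i+1)) ∘ Nat.succ) (List.range m')
      = List.map (fun i => e (2*i+3)) (List.range m') := by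
    apply List.map_congr_left
    intro i _
    simp only [Function.comp]
    congr 1
  rw [this]

theorem stmt {R : Type*} [CommRing R] {A : Type*} [Ring A] [Algebra R A] {X : Type*}
    (n : ℕ) (e : ℕ → A) (F G W V : X → X → A) (β : R) (α δ γ : X → X → R)
    (hrel : LabelAlgebraRel R A X n e F G W V β α δ γ)
    (hodd : Odd n) (a b c d : X) :
    V a c * Eprod e n * G b d * Oprod e n = γ a b • (G c d * Oprod e n) := by
  obtain ⟨m, rfl⟩ := hodd
  have hO : Oprod e (2*m+1) = ((List.range m).map (fun i => e (2*i+1))).prod := by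
    unfold Oprod; rw [show (2*m+1-1)/2 = m by omega]
  have hE : Eprod e (2*m+1) = ((List.range m).map (fun i => e (2*i+2))).prod := by
    unfold Eprod; rw [show (2*m+1-1)/2 = m by omega]
  rcases Nat.eq_zero_or_pos m with hm0 | hm1
  · subst hm0
    simp only [hO, hE, List.range_zero, List.map_nil, List.prod_nil, mul_one]
    exact hrel.L38 rfl a b c d
  obtain ⟨m', rfl⟩ : ∃ m', m = m' + 1 := ⟨m - 1, by omega⟩
  set m := m' + 1 with hmdef
  have h2n : 2 ≤ 2*m+1 := by omega
  set OQ : A := ((List.range m).map (fun i => e (2*i+1))).prod with hOQ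
  set EQ : A := ((List.range m).map (fun i => e (2*i+2))).prod with hEQ
  set O2 : A := ((List.range m').map (fun i => e (2*i+3))).prod with hO2
  have f1 : V a c * EQ = OQ * V a c :=
    lemV e (V a c) m (fun j h1 h2 => hrel.L7 a c j h1 (by omega))
  have f2 : V a c * G b d = G c b * e (2*m) * V a d := by
    have := hrel.L11 a c b d h2n
    rwa [show 2*m+1-1 = 2*m by omega] at this
  have f3 : Commute (G c b) OQ := by
    refine Commute.list_prod_right _ _ ?_
    intro y hy
    obtain ⟨i, hi, rfl⟩ := List.mem_map.mp hy
    have hi' := List.mem_range.mp hi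
    exact hrel.L3 c b (2*i+1) (by omega) (by omega)
  have f4 : OQ = e 1 * O2 := Osplit e m'
  have f5 : V a d * e 1 = W a d * descProd e 1 (2*m) := by
    have := hrel.L15 a d h2n
    rwa [show 2*m+1-1 = 2*m by omega] at this
  have f6 : e (2*m) * W a d = W a d * e (2*m-1) := by
    have := hrel.L6 a d (2*m) (by omega) (by omega)
    rwa [show 2*m-1 = 2*m-1 from rfl] at this
  have f7 : e (2*m-1) * descProd e 1 (2*m) = descProd e 1 (2*m-1) := by
    have hd1 : descProd e 1 (2*m) = e (2*m) * descProd e 1 (2*m-1) := by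
      rw [show 2*m = (2*m-1)+1 by omega] ; rw [descProd_succ, show 2*m-1+1 = 2*m by omega]
    have hd2 : descProd e 1 (2*m-1) = e (2*m-1) * descProd e 1 (2*m-2) := by
      rw [show 2*m-1 = (2*m-2)+1 by omega] ; rw [descProd_succ, show 2*m-2+1 = 2*m-1 by omega]
    have h5 : e (2*m-1) * e (2*m) * e (2*m-1) = e (2*m-1) :=
      hrel.L5 (2*m-1) (2*m) (by omega) (by omega) (by omega) (by omega) (Or.inr (by omega))
    rw [hd1, hd2, ← mul_assoc, ← mul_assoc, h5]
  have f8 : descProd e 1 (2*m-1) * O2 = e 1 * O2 := by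
    have := lemTL e m
      (fun i j h1 h2 h3 => hrel.L1 i j h1 (by omega) (by omega) (by omega) (Or.inl h2))
      (fun i h1 h2 => hrel.L5 (i+1) i (by omega) (by omega) h1 (by omega) (Or.inl rfl))
      m' (by omega)
    rwa [show 2*m'+1 = 2*m-1 by omega] at this
  have f9 : G c b * OQ * W a d * OQ = γ a b • (G c d * OQ) := by
    have := hrel.L33 ⟨m, rfl⟩ a b c d
    rwa [hO] at this
  have g1 : e (2*m) * (V a d * OQ) = W a d * OQ := by
    calc e (2*m) * (V a d * OQ)
        = e (2*m) * (V a d * e 1 * O2) := by rw [f4, ← mul_assoc (V a d)]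
      _ = e (2*m) * (W a d * descProd e 1 (2*m) * O2) := by rw [f5]
      _ = (e (2*m) * W a d) * (descProd e 1 (2*m) * O2) := by simp only [mul_assoc]
      _ = (W a d * e (2*m-1)) * (descProd e 1 (2*m) * O2) := by rw [f6]
      _ = W a d * (e (2*m-1) * descProd e 1 (2*m) * O2) := by simp only [mul_assoc]
      _ = W a d * (descProd e 1 (2*m-1) * O2) := by rw [f7]
      _ = W a d * (e 1 * O2) := by rw [f8]
      _ = W a d * OQ := by rw [← f4]
  rw [hO, hE]
  calc V a c * EQ * G b d * OQ
      = OQ * V a c * G b d * OQ := by rw [f1]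
    _ = OQ * (G c b * e (2*m) * V a d) * OQ := by rw [mul_assoc OQ, f2]
    _ = G c b * OQ * (e (2*m) * (V a d * OQ)) := by
        simp only [mul_assoc]
        rw [← mul_assoc OQ (G c b), ← f3.eq, mul_assoc]
    _ = G c b * OQ * (W a d * OQ) := by rw [g1]
    _ = γ a b • (G c d * OQ) := by simp only [← mul_assoc]; exact f9
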